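/- arXiv:2008.10918 — 3 statements merged into one kernel-verified Lean document; each statement's English description precedes it below -/
import Mathlib

section
/- If gcd(β_k/e_k, n_k) = 1 where n_k = e_{k-1}/e_k, then gcd(e_{k-1}, n_k·β_k/n_{k+1}, ..., n_k·β_k/n_g) / gcd(e_k, n_k·β_k/n_{k+1}, ..., n_k·β_k/n_g) = n_k / gcd(n_k, lcm(n_{k+1}, ..., n_g)). -/
theorem stmt1 (g k : ℕ) (β e n : ℕ → ℕ)
    (hg : 2 ≤ g) (hk : 1 ≤ k) (hkg : k ≤ g - 1)
    (hβ : ∀ i, i ≤ g → 0 < β i)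
    (he : ∀ i, e i = Finset.gcd (Finset.Icc 0 i) β)
    (hegcd : e g = 1)
    (hn : ∀ i, 1 ≤ i → n i = e (i - 1) / e i)
    (hcop : Nat.gcd (β k / e k) (n k) = 1) :
    Nat.gcd (e (k - 1)) (Finset.gcd (Finset.Icc (k + 1) g) (fun j => n k * β k / n j))
      / Nat.gcd (e k) (Finset.gcd (Finset.Icc (k + 1) g) (fun j => n k * β k / n j))
    = n k / Nat.gcd (n k) (Finset.lcm (Finset.Icc (k + 1) g) n) := by
  have hk1g : k + 1 ≤ g := by omega
  have hkgle : k ≤ g := by omega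
  -- e i is positive
  have hepos : ∀ i, 0 < e i := by
    intro i
    have h0 : (0 : ℕ) ∈ Finset.Icc 0 i := by simp
    have hd : e i ∣ β 0 := by rw [he i]; exact Finset.gcd_dvd h0
    exact Nat.pos_of_dvd_of_pos hd (hβ 0 (by omega))
  -- divisibility of the e's
  have hdvd : ∀ i j : ℕ, i ≤ j → e j ∣ e i := by
    intro i j hij
    rw [he i, he j]
    refine Finset.dvd_gcd fun x hx => ?_
    refine Finset.gcd_dvd ?_
    simp only [Finset.mem_Icc] at hx ⊢
    omega
  -- n i * e i = e (i-1)
  have hne : ∀ i, 1 ≤ i → n i * e i = e (i - 1) := by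
    intro i h1
    rw [hn i h1]
    exact Nat.div_mul_cancel (hdvd (i - 1) i (by omega))
  -- each n j divides e k for j in the interval
  have hnj : ∀ j ∈ Finset.Icc (k + 1) g, n j ∣ e k := by
    intro j hj
    simp only [Finset.mem_Icc] at hj
    have h1 : n j ∣ e (j - 1) := ⟨e j, (hne j (by omega)).symm⟩
    exact h1.trans (hdvd k (j - 1) (by omega))
  have hnjpos : ∀ j, 1 ≤ j → 0 < n j := by
    intro j h1
    have := hne j h1
    have := hepos (j - 1)
    have := hepos j
    nlinarith
  set L := Finset.lcm (Finset.Icc (k + 1) g) n with hL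
  have hLdvd : L ∣ e k := Finset.lcm_dvd hnj
  have hLpos : 0 < L := Nat.pos_of_dvd_of_pos hLdvd (hepos k)
  set M := e k / L with hM
  have heLM : e k = L * M := (Nat.mul_div_cancel' hLdvd).symm
  have hMpos : 0 < M := Nat.div_pos (Nat.le_of_dvd (hepos k) hLdvd) hLpos
  have hekβ : e k ∣ β k := by
    rw [he k]
    exact Finset.gcd_dvd (by simp)
  set b := β k / e k with hb
  have hβkb : β k = e k * b := (Nat.mul_div_cancel' hekβ).symm
  -- the inner gcd of (e k / n j) equals M
  have hD : Finset.gcd (Finset.Icc (k + 1) g) (fun j => e k / n j) = M := by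
    set D := Finset.gcd (Finset.Icc (k + 1) g) (fun j => e k / n j) with hDdef
    have hMD : M ∣ D := by
      refine Finset.dvd_gcd fun j hj => ?_
      obtain ⟨t, ht⟩ := Finset.dvd_lcm (f := n) hj
      have hjpos : 0 < n j := hnjpos j (by simp only [Finset.mem_Icc] at hj; omega)
      have : e k = n j * (t * M) := by rw [heLM, hL, ht]; ring
      rw [this, Nat.mul_div_cancel_left _ hjpos]
      exact dvd_mul_left M t
    have hg1 : k + 1 ∈ Finset.Icc (k + 1) g := by simp [hk1g]
    have hDd1 : D ∣ e k / n (k + 1) := Finset.gcd_dvd hg1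
    have hDek : D ∣ e k := hDd1.trans (Nat.div_dvd_of_dvd (hnj _ hg1))
    have hDpos : 0 < D := by
      refine Nat.pos_of_dvd_of_pos hDd1 ?_
      have h1 := hnj _ hg1
      have h2 := hnjpos (k + 1) (by omega)
      exact Nat.div_pos (Nat.le_of_dvd (hepos k) h1) h2
    have hDM : D ∣ M := by
      have hLD : L ∣ e k / D := by
        refine Finset.lcm_dvd fun j hj => ?_
        obtain ⟨u, hu⟩ := Finset.gcd_dvd (f := fun j => e k / n j) hj
        have hjpos : 0 < n j := hnjpos j (by simp only [Finset.mem_Icc] at hj; omega)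
        have hnje : n j ∣ e k := hnj j hj
        have hek : e k = D * (n j * u) := by
          rw [← Nat.div_mul_cancel hnje, hu]; ring
        rw [hek, Nat.mul_div_cancel_left _ hDpos]
        exact dvd_mul_right (n j) u
      obtain ⟨v, hv⟩ := hLD
      have : e k = L * (D * v) := by
        rw [← Nat.div_mul_cancel hDek, hv]; ring
      have hMeq : M = D * v := by
        have := heLM
        exact Nat.eq_of_mul_eq_mul_left hLpos (by omega)
      exact ⟨v, hMeq⟩
    exact Nat.dvd_antisymm hDM hMD
  -- compute the big gcd
  have hG : Finset.gcd (Finset.Icc (k + 1) g) (fun j => n k * β k / n j)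
      = n k * b * M := by
    have hterm : ∀ j ∈ Finset.Icc (k + 1) g,
        n k * β k / n j = n k * b * (e k / n j) := by
      intro j hj
      have hnje : n j ∣ e k := hnj j hj
      rw [hβkb, show n k * (e k * b) = n k * b * e k by ring,
        Nat.mul_div_assoc _ hnje]
    rw [Finset.gcd_congr rfl hterm, Finset.gcd_mul_left, hD]
    simp
  have hek1 : e (k - 1) = n k * e k := (hne k hk).symm
  have hcop' : Nat.Coprime (n k) b := Nat.Coprime.symm hcop
  rw [hG, hek1, Nat.gcd_comm (n k) L]
  have hnum : Nat.gcd (n k * e k) (n k * b * M) = n k * Nat.gcd L b * M := by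
    rw [heLM, show n k * (L * M) = n k * L * M by ring,
      Nat.gcd_mul_right, Nat.gcd_mul_left]
  have hden : Nat.gcd (e k) (n k * b * M) = Nat.gcd L (n k) * Nat.gcd L b * M := by
    rw [heLM, Nat.gcd_mul_right, hcop'.gcd_mul L]
  rw [hnum, hden, Nat.mul_div_mul_right _ _ hMpos,
    show n k * Nat.gcd L b = Nat.gcd L b * n k by ring,
    show Nat.gcd L (n k) * Nat.gcd L b = Nat.gcd L b * Nat.gcd L (n k) by ring,
    Nat.mul_div_mul_left _ _ (Nat.gcd_pos_of_pos_left b hLpos)]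
end

section
/- The sequence R_l defined by R_0 = 1, R_1 = a_1, and R_l = ∏_{k=1}^l a_k + Σ_{i=1}^{⌊l/2⌋} (-1)^i Σ_{K ∈ s(l), |K|=i} (∏_{(k,k+1)∈K} p_k/d_{k(k+1)}²)(∏_{k∈c(K)} a_k), satisfies the three-term recurrence -R_{l+1} = -a_{l+1} R_l + (p_l / d_{l(l+1)}²) R_{l-1} for all 1 ≤ l ≤ g-2. -/
section Aux5
open Finset

lemma card_noadj (m : ℕ) (K : Finset ℕ) (hK : K ⊆ Finset.Icc 1 m)
    (h : ∀ k ∈ K, k + 1 ∉ K) : 2 * K.card ≤ m + 1 := by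
  have hdisj : Disjoint K (K.image (· + 1)) := by
    rw [Finset.disjoint_left]
    intro x hx hx'
    obtain ⟨y, hy, rfl⟩ := Finset.mem_image.mp hx'
    exact h y hy hx
  have hsub : K ∪ K.image (· + 1) ⊆ Finset.Icc 1 (m + 1) := by
    intro x hx
    rcases Finset.mem_union.mp hx with hx | hx
    · have := hK hx; simp only [Finset.mem_Icc] at this ⊢; omega
    · obtain ⟨y, hy, rfl⟩ := Finset.mem_image.mp hx
      have := hK hy; simp only [Finset.mem_Icc] at this ⊢; omega
  have hcard := Finset.card_le_card hsub
  rw [Finset.card_union_of_disjoint hdisj,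
    Finset.card_image_of_injective _ (add_left_injective 1)] at hcard
  simp [Nat.card_Icc] at hcard; omega

def SS5 (l i : ℕ) : Finset (Finset ℕ) :=
  (Finset.Icc 1 (l - 1)).powerset.filter (fun K => (∀ k ∈ K, k + 1 ∉ K) ∧ K.card = i)

def UU5 (p : ℕ → ℕ) (d a : ℕ → ℚ) (l i : ℕ) : ℚ :=
  ∑ K ∈ SS5 l i, (∏ k ∈ K, (p k : ℚ) / (d k) ^ 2) *
    (∏ k ∈ (Finset.Icc 1 l).filter (fun k => k ∉ K ∧ k - 1 ∉ K), a k)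

lemma SS5_zero (l : ℕ) : SS5 l 0 = {∅} := by
  ext K
  simp only [SS5, Finset.mem_filter, Finset.mem_powerset, Finset.mem_singleton,
    Finset.card_eq_zero]
  constructor
  · rintro ⟨-, -, rfl⟩; rfl
  · rintro rfl; simp

lemma UU5_zero (p : ℕ → ℕ) (d a : ℕ → ℚ) (l : ℕ) :
    UU5 p d a l 0 = ∏ k ∈ Finset.Icc 1 l, a k := by
  rw [UU5, SS5_zero]
  simp

lemma UU5_vanish (p : ℕ → ℕ) (d a : ℕ → ℚ) (l i : ℕ) (h : l / 2 < i) :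
    UU5 p d a l i = 0 := by
  rw [UU5]
  apply Finset.sum_eq_zero
  intro K hK
  simp only [SS5, Finset.mem_filter, Finset.mem_powerset] at hK
  obtain ⟨hsub, hadj, hcard⟩ := hK
  have := card_noadj (l - 1) K hsub hadj
  -- 2*i ≤ l - 1 + 1 ≤ l (for l ≥ 1) contradicts l/2 < i; l = 0 case: K ⊆ ∅ so i = 0
  exfalso
  rcases Nat.eq_zero_or_pos l with rfl | hl
  · simp at hsub
    subst hsub
    simp at hcard
    omega
  · omega
lemma UU5_rec (p : ℕ → ℕ) (d a : ℕ → ℚ) (l i : ℕ) (hl : 1 ≤ l) (hi : 1 ≤ i) :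
    UU5 p d a (l + 1) i =
      a (l + 1) * UU5 p d a l i + ((p l : ℚ) / (d l) ^ 2) * UU5 p d a (l - 1) (i - 1) := by
  rw [UU5]
  rw [← Finset.sum_filter_add_sum_filter_not (SS5 (l + 1) i) (fun K => l ∈ K)]
  have hA : (SS5 (l + 1) i).filter (fun K => l ∉ K) = SS5 l i := by
    ext K
    simp only [SS5, Finset.mem_filter, Finset.mem_powerset, Nat.add_sub_cancel]
    constructor
    · rintro ⟨⟨hsub, h2, h3⟩, hlK⟩
      refine ⟨fun x hx => ?_, h2, h3⟩
      have hx1 := hsub hx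
      have hxl : x ≠ l := fun h => hlK (h ▸ hx)
      simp only [Finset.mem_Icc] at hx1 ⊢
      omega
    · rintro ⟨hsub, h2, h3⟩
      have hlK : l ∉ K := fun h => by
        have := hsub h; simp only [Finset.mem_Icc] at this; omega
      refine ⟨⟨fun x hx => ?_, h2, h3⟩, hlK⟩
      have hx1 := hsub hx
      simp only [Finset.mem_Icc] at hx1 ⊢
      omega
  have hAterm : ∀ K ∈ SS5 l i,
      (∏ k ∈ K, (p k : ℚ) / (d k) ^ 2) *
        (∏ k ∈ (Finset.Icc 1 (l + 1)).filter (fun k => k ∉ K ∧ k - 1 ∉ K), a k)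
      = a (l + 1) * ((∏ k ∈ K, (p k : ℚ) / (d k) ^ 2) *
        (∏ k ∈ (Finset.Icc 1 l).filter (fun k => k ∉ K ∧ k - 1 ∉ K), a k)) := by
    intro K hK
    simp only [SS5, Finset.mem_filter, Finset.mem_powerset] at hK
    obtain ⟨hsub, -, -⟩ := hK
    have hmem : ∀ x ∈ K, 1 ≤ x ∧ x ≤ l - 1 := by
      intro x hx; have := hsub hx; simpa [Finset.mem_Icc] using this
    have hlK : l ∉ K := fun h => by have := hmem l h; omega
    have hl1K : l + 1 ∉ K := fun h => by have := hmem (l + 1) h; omega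
    have hset : (Finset.Icc 1 (l + 1)).filter (fun k => k ∉ K ∧ k - 1 ∉ K)
        = insert (l + 1) ((Finset.Icc 1 l).filter (fun k => k ∉ K ∧ k - 1 ∉ K)) := by
      ext x
      simp only [Finset.mem_filter, Finset.mem_Icc, Finset.mem_insert]
      constructor
      · rintro ⟨⟨h1, h2⟩, h3, h4⟩
        rcases Nat.lt_or_ge x (l + 1) with h | h
        · exact Or.inr ⟨⟨h1, by omega⟩, h3, h4⟩
        · exact Or.inl (by omega)
      · rintro (rfl | ⟨⟨h1, h2⟩, h3, h4⟩)
        · exact ⟨⟨by omega, le_refl _⟩, hl1K, by simpa using hlK⟩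
        · exact ⟨⟨h1, by omega⟩, h3, h4⟩
    have hnm : l + 1 ∉ (Finset.Icc 1 l).filter (fun k => k ∉ K ∧ k - 1 ∉ K) := by
      simp [Finset.mem_Icc]
    rw [hset, Finset.prod_insert hnm]
    ring
  rw [hA, Finset.sum_congr rfl hAterm, ← Finset.mul_sum]
  have hB : ∑ K ∈ (SS5 (l + 1) i).filter (fun K => l ∈ K),
      (∏ k ∈ K, (p k : ℚ) / (d k) ^ 2) *
        (∏ k ∈ (Finset.Icc 1 (l + 1)).filter (fun k => k ∉ K ∧ k - 1 ∉ K), a k)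
      = ((p l : ℚ) / (d l) ^ 2) * UU5 p d a (l - 1) (i - 1) := by
    rw [UU5, Finset.mul_sum]
    have key1 : ∀ K ∈ (SS5 (l + 1) i).filter (fun K => l ∈ K),
        K.erase l ∈ SS5 (l - 1) (i - 1) := by
      intro K hK
      simp only [SS5, Finset.mem_filter, Finset.mem_powerset, Nat.add_sub_cancel] at hK
      obtain ⟨⟨hsub, hadj, hcard⟩, hlK⟩ := hK
      have hl1 : l - 1 ∉ K := fun h => by
        have := hadj (l - 1) h
        rw [Nat.sub_add_cancel hl] at this
        exact this hlK
      simp only [SS5, Finset.mem_filter, Finset.mem_powerset]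
      refine ⟨fun x hx => ?_, fun k hk => ?_, ?_⟩
      · rw [Finset.mem_erase] at hx
        obtain ⟨hxl, hx⟩ := hx
        have h1 := hsub hx
        have hxl1 : x ≠ l - 1 := fun h => hl1 (h ▸ hx)
        simp only [Finset.mem_Icc] at h1 ⊢
        omega
      · rw [Finset.mem_erase] at hk
        rw [Finset.mem_erase]
        push_neg
        intro _
        exact hadj k hk.2
      · rw [Finset.card_erase_of_mem hlK, hcard]
    have key2 : ∀ K' ∈ SS5 (l - 1) (i - 1),
        insert l K' ∈ (SS5 (l + 1) i).filter (fun K => l ∈ K) := by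
      intro K' hK'
      simp only [SS5, Finset.mem_filter, Finset.mem_powerset] at hK'
      obtain ⟨hsub, hadj, hcard⟩ := hK'
      have hmem : ∀ x ∈ K', 1 ≤ x ∧ x ≤ l - 1 - 1 := by
        intro x hx; have := hsub hx; simpa [Finset.mem_Icc] using this
      have hlK' : l ∉ K' := fun h => by have := hmem l h; omega
      simp only [SS5, Finset.mem_filter, Finset.mem_powerset, Nat.add_sub_cancel]
      refine ⟨⟨fun x hx => ?_, fun k hk => ?_, ?_⟩, Finset.mem_insert_self l K'⟩
      · rw [Finset.mem_insert] at hx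
        rcases hx with rfl | hx
        · simp only [Finset.mem_Icc]; omega
        · have := hmem x hx; simp only [Finset.mem_Icc]; omega
      · rw [Finset.mem_insert] at hk
        rw [Finset.mem_insert]
        push_neg
        rcases hk with rfl | hk
        · constructor
          · omega
          · intro h; have := hmem (k + 1) h; omega
        · have := hmem k hk
          constructor
          · omega
          · exact hadj k hk
      · rw [Finset.card_insert_of_notMem hlK', hcard]
        omega
    have key3 : ∀ K ∈ (SS5 (l + 1) i).filter (fun K => l ∈ K),
        insert l (K.erase l) = K := by
      intro K hK
      simp only [Finset.mem_filter] at hK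
      exact Finset.insert_erase hK.2
    have key4 : ∀ K' ∈ SS5 (l - 1) (i - 1), (insert l K').erase l = K' := by
      intro K' hK'
      simp only [SS5, Finset.mem_filter, Finset.mem_powerset] at hK'
      have hlK' : l ∉ K' := fun h => by
        have := hK'.1 h; simp only [Finset.mem_Icc] at this; omega
      exact Finset.erase_insert hlK'
    have key5 : ∀ K ∈ (SS5 (l + 1) i).filter (fun K => l ∈ K),
        (∏ k ∈ K, (p k : ℚ) / (d k) ^ 2) *
          (∏ k ∈ (Finset.Icc 1 (l + 1)).filter (fun k => k ∉ K ∧ k - 1 ∉ K), a k)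
        = ((p l : ℚ) / (d l) ^ 2) *
            ((∏ k ∈ K.erase l, (p k : ℚ) / (d k) ^ 2) *
              (∏ k ∈ (Finset.Icc 1 (l - 1)).filter
                  (fun k => k ∉ K.erase l ∧ k - 1 ∉ K.erase l), a k)) := by
      intro K hK
      simp only [SS5, Finset.mem_filter, Finset.mem_powerset, Nat.add_sub_cancel] at hK
      obtain ⟨⟨hsub, hadj, hcard⟩, hlK⟩ := hK
      have hl1 : l - 1 ∉ K := fun h => by
        have := hadj (l - 1) h
        rw [Nat.sub_add_cancel hl] at this
        exact this hlK
      have hw : (∏ k ∈ K, (p k : ℚ) / (d k) ^ 2)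
          = ((p l : ℚ) / (d l) ^ 2) * ∏ k ∈ K.erase l, (p k : ℚ) / (d k) ^ 2 :=
        (Finset.mul_prod_erase K _ hlK).symm
      have hAset : (Finset.Icc 1 (l + 1)).filter (fun k => k ∉ K ∧ k - 1 ∉ K)
          = (Finset.Icc 1 (l - 1)).filter
              (fun k => k ∉ K.erase l ∧ k - 1 ∉ K.erase l) := by
        ext x
        simp only [Finset.mem_filter, Finset.mem_Icc, Finset.mem_erase]
        constructor
        · rintro ⟨⟨h1, h2⟩, h3, h4⟩
          have hxl : x ≠ l := fun h => h3 (h ▸ hlK)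
          have hxl1 : x ≠ l + 1 := by
            rintro rfl
            exact h4 (by simpa using hlK)
          refine ⟨⟨h1, by omega⟩, fun h => h3 h.2, fun h => h4 h.2⟩
        · rintro ⟨⟨h1, h2⟩, h3, h4⟩
          have hxl : x ≠ l := by omega
          have hx1l : x - 1 ≠ l := by omega
          refine ⟨⟨h1, by omega⟩, fun h => h3 ⟨hxl, h⟩, fun h => h4 ⟨hx1l, h⟩⟩
      rw [hw, hAset]
      ring
    exact Finset.sum_bij' (fun K _ => K.erase l) (fun K' _ => insert l K')
      key1 key2 key3 key4 key5
  rw [hB]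
  have hU : UU5 p d a l i = ∑ K ∈ SS5 l i,
      (∏ k ∈ K, (p k : ℚ) / (d k) ^ 2) *
        (∏ k ∈ (Finset.Icc 1 l).filter (fun k => k ∉ K ∧ k - 1 ∉ K), a k) := rfl
  rw [← hU]
  ring


def FF5 (p : ℕ → ℕ) (d a : ℕ → ℚ) (l : ℕ) : ℚ :=
  ∑ i ∈ Finset.range (l / 2 + 1), (-1 : ℚ) ^ i * UU5 p d a l i

lemma FF5_rec (p : ℕ → ℕ) (d a : ℕ → ℚ) (l : ℕ) (hl : 1 ≤ l) :
    FF5 p d a (l + 1) = a (l + 1) * FF5 p d a l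
      - ((p l : ℚ) / (d l) ^ 2) * FF5 p d a (l - 1) := by
  set M := (l + 1) / 2 with hM
  have hstep : ∀ j ∈ Finset.range M,
      (-1 : ℚ) ^ (j + 1) * UU5 p d a (l + 1) (j + 1)
      = a (l + 1) * ((-1 : ℚ) ^ (j + 1) * UU5 p d a l (j + 1))
        + (-(((p l : ℚ) / (d l) ^ 2))) * ((-1 : ℚ) ^ j * UU5 p d a (l - 1) j) := by
    intro j _
    rw [UU5_rec p d a l (j + 1) hl (by omega)]
    simp only [Nat.add_sub_cancel]
    ring
  have h0 : UU5 p d a (l + 1) 0 = a (l + 1) * UU5 p d a l 0 := by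
    rw [UU5_zero, UU5_zero, Finset.prod_Icc_succ_top (by omega : 1 ≤ l + 1)]
    ring
  have hpad : ∑ i ∈ Finset.range (M + 1), (-1 : ℚ) ^ i * UU5 p d a l i
      = FF5 p d a l := by
    rw [FF5]
    refine (Finset.sum_subset ?_ ?_).symm
    · intro x hx
      simp only [Finset.mem_range] at hx ⊢
      omega
    · intro x hx hx'
      simp only [Finset.mem_range] at hx hx'
      rw [UU5_vanish p d a l x (by omega)]
      ring
  have hMeq : M = (l - 1) / 2 + 1 := by omega
  rw [FF5, ← hM, Finset.sum_range_succ', Finset.sum_congr rfl hstep,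
    Finset.sum_add_distrib, ← Finset.mul_sum, ← Finset.mul_sum]
  rw [show ((-1 : ℚ) ^ 0 * UU5 p d a (l + 1) 0) = a (l + 1) * ((-1 : ℚ) ^ 0 * UU5 p d a l 0)
    from by rw [h0]; ring]
  rw [← hpad, Finset.sum_range_succ']
  rw [FF5, ← hMeq]
  ring

end Aux5


theorem stmt5 (g : ℕ) (hg : 3 ≤ g) (a : ℕ → ℚ) (d : ℕ → ℚ) (p : ℕ → ℕ)
    (hd : ∀ k, 1 ≤ k → k ≤ g - 2 → 0 < d k) (hp : ∀ k, 1 ≤ k → k ≤ g - 2 → 0 < p k)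
    (R : ℕ → ℚ)
    (hR0 : R 0 = 1) (hR1 : R 1 = a 1)
    (hR : ∀ l, 2 ≤ l → l ≤ g - 1 →
      R l = (∏ k ∈ Finset.Icc 1 l, a k)
        + ∑ i ∈ Finset.Icc 1 (l / 2), (-1 : ℚ) ^ i *
            ∑ K ∈ ((Finset.Icc 1 (l - 1)).powerset.filter
                (fun K => K.Nonempty ∧ (∀ k ∈ K, k + 1 ∉ K) ∧ K.card = i)),
              (∏ k ∈ K, (p k : ℚ) / (d k) ^ 2) *
              (∏ k ∈ (Finset.Icc 1 l).filter (fun k => k ∉ K ∧ k - 1 ∉ K), a k)) :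
    ∀ l, 1 ≤ l → l ≤ g - 2 →
      -R (l + 1) = -a (l + 1) * R l + ((p l : ℚ) / (d l) ^ 2) * R (l - 1) := by
  have hRF : ∀ l, l ≤ g - 1 → R l = FF5 p d a l := by
    intro l hlg
    match l, hlg with
    | 0, _ => simp [FF5, UU5_zero, hR0]
    | 1, _ => simp [FF5, UU5_zero, hR1]
    | (m + 2), hlg =>
      set l := m + 2 with hldef
      rw [hR l (by omega) hlg, FF5]
      have hfilter : ∀ i, 1 ≤ i →
          ((Finset.Icc 1 (l - 1)).powerset.filter
            (fun K => K.Nonempty ∧ (∀ k ∈ K, k + 1 ∉ K) ∧ K.card = i)) = SS5 l i := by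
        intro i hi
        rw [SS5]
        apply Finset.filter_congr
        intro K _
        simp only [and_iff_right_iff_imp]
        rintro ⟨-, hcard⟩
        rw [← Finset.card_pos, hcard]
        omega
      have hinner : ∀ i ∈ Finset.Icc 1 (l / 2),
          (-1 : ℚ) ^ i *
            (∑ K ∈ ((Finset.Icc 1 (l - 1)).powerset.filter
                (fun K => K.Nonempty ∧ (∀ k ∈ K, k + 1 ∉ K) ∧ K.card = i)),
              (∏ k ∈ K, (p k : ℚ) / (d k) ^ 2) *
              (∏ k ∈ (Finset.Icc 1 l).filter (fun k => k ∉ K ∧ k - 1 ∉ K), a k))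
          = (-1 : ℚ) ^ i * UU5 p d a l i := by
        intro i hi
        simp only [Finset.mem_Icc] at hi
        rw [UU5, hfilter i hi.1]
      rw [Finset.sum_congr rfl hinner]
      -- now : ∏ + ∑_{i ∈ Icc 1 (l/2)} (-1)^i UU5 = ∑_{i ∈ range (l/2+1)} (-1)^i UU5
      rw [Finset.sum_range_succ']
      have hre : ∑ i ∈ Finset.Icc 1 (l / 2), (-1 : ℚ) ^ i * UU5 p d a l i
          = ∑ j ∈ Finset.range (l / 2), (-1 : ℚ) ^ (j + 1) * UU5 p d a l (j + 1) := by
        have himg : Finset.Icc 1 (l / 2) = (Finset.range (l / 2)).image (· + 1) := by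
          ext x
          simp only [Finset.mem_Icc, Finset.mem_image, Finset.mem_range]
          constructor
          · intro h; exact ⟨x - 1, by omega, by omega⟩
          · rintro ⟨y, hy, rfl⟩; omega
        rw [himg, Finset.sum_image (fun x _ y _ h => by omega)]
      rw [hre, UU5_zero]
      ring
  intro l hl1 hl2
  rw [hRF (l + 1) (by omega), hRF l (by omega), hRF (l - 1) (by omega),
    FF5_rec p d a l hl1]
  ring
end

section
/- Define B_s as the tridiagonal matrix with diagonal -a_s, ..., -a_{g-1} and off-diagonal entries 1/d_{s(s+1)}, ..., 1/d_{(g-2)(g-1)}. If p_k = 1 for all k ≥ t with 2 ≤ t ≤ g-2, then R_{t-1}·det(B_t) + (p_{t-1}·R_{t-2}/d_{(t-1)t}²)·det(B_{t+1}) = (-1)^{g-t}·R_{g-1}, where R_l satisfies R_0 = 1, R_1 = a_1, and R_{l+1} = a_{l+1}R_l - (p_l/d_{l(l+1)}²)R_{l-1}. -/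
/-- The `(g-s) × (g-s)` symmetric tridiagonal matrix `B_s` with diagonal entries
`-a s, ..., -a (g-1)` and off-diagonal entries `1 / d k` for `s ≤ k ≤ g-2`
(where `d k` stands for `d_{k(k+1)}`). -/
def triB (a d : ℕ → ℚ) (g s : ℕ) : Matrix (Fin (g - s)) (Fin (g - s)) ℚ :=
  Matrix.of fun i j =>
    if (i : ℕ) = (j : ℕ) then -a (s + (i : ℕ))
    else if (i : ℕ) + 1 = (j : ℕ) then 1 / d (s + (i : ℕ))
    else if (j : ℕ) + 1 = (i : ℕ) then 1 / d (s + (j : ℕ))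
    else 0

def tri (b c : ℕ → ℚ) (n : ℕ) : Matrix (Fin n) (Fin n) ℚ :=
  Matrix.of fun i j =>
    if (i : ℕ) = (j : ℕ) then b i
    else if (i : ℕ) + 1 = (j : ℕ) then c i
    else if (j : ℕ) + 1 = (i : ℕ) then c j
    else 0

lemma triB_eq (a d : ℕ → ℚ) (g s : ℕ) :
    triB a d g s = tri (fun k => -a (s + k)) (fun k => 1 / d (s + k)) (g - s) := rfl

lemma tri_det_zero (b c : ℕ → ℚ) : (tri b c 0).det = 1 := Matrix.det_fin_zero

lemma tri_det_one (b c : ℕ → ℚ) : (tri b c 1).det = b 0 := by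
  simp [Matrix.det_fin_one, tri]

lemma tri_det_rec (b c : ℕ → ℚ) (n : ℕ) :
    (tri b c (n + 2)).det
      = b 0 * (tri (fun k => b (k+1)) (fun k => c (k+1)) (n+1)).det
        - (c 0)^2 * (tri (fun k => b (k+2)) (fun k => c (k+2)) n).det := by
  rw [Matrix.det_succ_row_zero, Fin.sum_univ_succ, Fin.sum_univ_succ]
  have h1 : (tri b c (n+2)).submatrix Fin.succ (Fin.succAbove 0)
      = tri (fun k => b (k+1)) (fun k => c (k+1)) (n+1) := by
    ext i j
    simp only [Matrix.submatrix_apply, tri, Matrix.of_apply, Fin.succAbove,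
      Fin.coe_castSucc, Fin.val_succ]
    have : ¬ (j.castSucc < (0 : Fin (n+2))) := by simp
    rw [if_neg this]
    simp only [Fin.val_succ]
    split_ifs <;> first | rfl | omega
  have h2 : ((tri b c (n+2)).submatrix Fin.succ (Fin.succAbove 1)).submatrix
      (Fin.succAbove 0) Fin.succ
      = tri (fun k => b (k+2)) (fun k => c (k+2)) n := by
    ext i j
    simp only [Matrix.submatrix_apply, tri, Matrix.of_apply, Fin.succAbove,
      Fin.coe_castSucc, Fin.val_succ]
    have hj : ¬ (j.succ.castSucc < (1 : Fin (n+2))) := by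
      simp [Fin.lt_def]
    have hi : ¬ (i.castSucc < (0 : Fin (n+1))) := by simp
    rw [if_neg hi, if_neg hj]
    simp only [Fin.val_succ]
    split_ifs <;> first | rfl | omega
  have hcol : ∀ i : Fin (n+1),
      ((tri b c (n+2)).submatrix Fin.succ (Fin.succAbove 1)) i 0
        = if (i : ℕ) = 0 then c 0 else 0 := by
    intro i
    simp only [Matrix.submatrix_apply, Fin.succAbove, Fin.castSucc_zero]
    have h0 : (0 : Fin (n+2)) < 1 := by simp [Fin.lt_def, Fin.val_one]
    simp only [h0, ↓reduceIte]
    simp only [tri, Matrix.of_apply, Fin.val_succ, Fin.val_zero]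
    split_ifs <;> first | rfl | omega | (exfalso; assumption) | simp_all
  have hN : ((tri b c (n+2)).submatrix Fin.succ (Fin.succAbove 1)).det
      = c 0 * (tri (fun k => b (k+2)) (fun k => c (k+2)) n).det := by
    rw [Matrix.det_succ_column_zero, Fin.sum_univ_succ, h2]
    rw [hcol 0]
    have : ∀ i : Fin n, ((-1 : ℚ))^((i.succ : ℕ)) *
        ((tri b c (n+2)).submatrix Fin.succ (Fin.succAbove 1)) i.succ 0 *
        ((((tri b c (n+2)).submatrix Fin.succ (Fin.succAbove 1)).submatrix
          (Fin.succAbove i.succ) Fin.succ).det) = 0 := by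
      intro i
      rw [hcol i.succ]
      simp
    rw [Finset.sum_congr rfl (fun i _ => this i)]
    simp
  simp only [Fin.succ_zero_eq_one]
  rw [h1, hN]
  have e00 : (tri b c (n+2)) 0 0 = b 0 := by simp [tri]
  have e01 : (tri b c (n+2)) 0 1 = c 0 := by
    simp [tri, Fin.val_one]
  rw [e00, e01]
  have : ∀ j : Fin n, ((-1 : ℚ))^(((j.succ.succ : Fin (n+2)) : ℕ)) *
      (tri b c (n+2)) 0 j.succ.succ *
      (((tri b c (n+2)).submatrix Fin.succ (Fin.succAbove j.succ.succ)).det) = 0 := by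
    intro j
    have : (tri b c (n+2)) 0 j.succ.succ = 0 := by
      simp only [tri, Matrix.of_apply, Fin.val_succ, Fin.val_zero]
      split_ifs <;> first | rfl | omega | (exfalso; assumption)
    rw [this]
    ring
  rw [Finset.sum_congr rfl (fun j _ => this j)]
  simp
  ring

theorem stmt9 (g t : ℕ) (hg : 4 ≤ g) (ht : 2 ≤ t) (htg : t ≤ g - 2)
    (a d : ℕ → ℚ) (p : ℕ → ℕ)
    (hd : ∀ k, 1 ≤ k → k ≤ g - 2 → d k ≠ 0)
    (hp : ∀ k, 1 ≤ k → k ≤ g - 2 → 0 < p k)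
    (hpt : ∀ k, t ≤ k → p k = 1)
    (R : ℕ → ℚ) (hR0 : R 0 = 1) (hR1 : R 1 = a 1)
    (hR : ∀ l, 1 ≤ l → R (l + 1) = a (l + 1) * R l - ((p l : ℚ) / (d l) ^ 2) * R (l - 1)) :
    R (t - 1) * (triB a d g t).det
      + ((p (t - 1) : ℚ) * R (t - 2) / (d (t - 1)) ^ 2) * (triB a d g (t + 1)).det
    = (-1 : ℚ) ^ (g - t) * R (g - 1) := by
  have hdetrec : ∀ s, s + 2 ≤ g →
      (triB a d g s).det = (-a s) * (triB a d g (s+1)).det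
        - (1 / d s)^2 * (triB a d g (s+2)).det := by
    intro s hs
    have hn : g - s = (g - s - 2) + 2 := by omega
    have h1 : g - (s+1) = (g - s - 2) + 1 := by omega
    have h2 : g - (s+2) = g - s - 2 := by omega
    have fb1 : (fun k => -a (s + (k+1))) = (fun k => -a ((s+1) + k)) := by
      funext k; rw [show s + (k+1) = (s+1) + k by omega]
    have fc1 : (fun k => 1 / d (s + (k+1))) = (fun k => 1 / d ((s+1) + k)) := by
      funext k; rw [show s + (k+1) = (s+1) + k by omega]
    have fb2 : (fun k => -a (s + (k+2))) = (fun k => -a ((s+2) + k)) := by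
      funext k; rw [show s + (k+2) = (s+2) + k by omega]
    have fc2 : (fun k => 1 / d (s + (k+2))) = (fun k => 1 / d ((s+2) + k)) := by
      funext k; rw [show s + (k+2) = (s+2) + k by omega]
    rw [triB_eq a d g s, triB_eq a d g (s+1), triB_eq a d g (s+2), hn, h1, h2,
      tri_det_rec]
    rw [fb1, fc1, fb2, fc2]
    norm_num
  have key : ∀ n s, t ≤ s → s ≤ g - 1 → g - 1 - s = n →
      R (s - 1) * (triB a d g s).det
        + ((p (s - 1) : ℚ) * R (s - 2) / (d (s - 1)) ^ 2) * (triB a d g (s + 1)).det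
      = (-1 : ℚ) ^ (g - s) * R (g - 1) := by
    intro n
    induction n with
    | zero =>
      intro s hts hsg hns
      obtain rfl : s = g - 1 := by omega
      have h1 : g - (g - 1) = 1 := by omega
      have h0 : g - (g - 1 + 1) = 0 := by omega
      rw [triB_eq, triB_eq, h1, h0, tri_det_one, tri_det_zero]
      have hRg : R (g - 1) = a (g-1) * R (g-2) - ((p (g-2) : ℚ)/(d (g-2))^2) * R (g-3) := by
        have h := hR (g-2) (by omega)
        rw [show g-2+1 = g-1 by omega, show g-2-1 = g-3 by omega] at h
        exact h
      rw [show g - 1 - 1 = g - 2 by omega, show g - 1 - 2 = g - 3 by omega]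
      simp only [Nat.add_zero]
      rw [hRg]
      ring
    | succ n ih =>
      intro s hts hsg hns
      have hsg2 : s + 2 ≤ g := by omega
      have hmain := ih (s+1) (by omega) (by omega) (by omega)
      rw [show s + 1 - 1 = s by omega, show s + 1 - 2 = s - 1 by omega,
        show s + 1 + 1 = s + 2 by omega] at hmain
      rw [hpt s hts] at hmain
      have hRs : R s = a s * R (s-1) - ((p (s-1) : ℚ)/(d (s-1))^2) * R (s-2) := by
        have h := hR (s-1) (by omega)
        rw [show s-1+1 = s by omega, show s-1-1 = s-2 by omega] at h
        exact h
      have hpow : (-1:ℚ)^(g-s) = -(-1:ℚ)^(g-(s+1)) := by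
        rw [show g - s = (g - (s+1)) + 1 by omega, pow_succ]; ring
      rw [hdetrec s hsg2, hpow]
      push_cast at hmain
      linear_combination (-1 : ℚ) * hmain + (triB a d g (s+1)).det * hRs
  exact key (g - 1 - t) t le_rfl (by omega) rfl
end
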